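/- Let u be an element of the free metabelian nilpotent of class c Lie algebra L_{n,c} such that the inner automorphism ε_u maps every symmetric element of L_{n,c} to a symmetric element. Then the linear part of u is a scalar multiple of x_1 + ⋯ + x_n; that is, there exists α ∈ K such that u − α(x_1 + ⋯ + x_n) lies in the commutator ideal L_{n,c}' = [L_{n,c}, L_{n,c}]. -/

import Mathlib

/-!
Map `L_{n,c}` (`c ≥ 2`) to the class-two Lie algebra `TwoStep K (Fin n)` by `x_i ↦ (e_i, 0)`.
All double brackets vanish there, so `ε_u` becomes `v ↦ v + [v, u]`, and the symmetric element
`s = x_1 + ⋯ + x_n` goes to `(1, 0)`. Writing `λ_1, …, λ_n` for the coefficients of the linear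
part of `u`, `ε_u s` goes to `(1, (λ_j - λ_i)_{i,j})`; invariance under the transposition `(i j)`
gives `λ_i - λ_j = λ_j - λ_i`, so all `λ_i` agree as `2 ≠ 0` in `K`.
-/

noncomputable section

open LieAlgebra LieModule

variable (K : Type*) [Field K] [CharZero K] (n c : ℕ)

/-- The free Lie algebra `L_n` of rank `n` over `K`. -/
abbrev L := FreeLieAlgebra K (Fin n)

/-- The generators `x_1, …, x_n` of `L_n`. -/
def X (i : Fin n) : L K n := FreeLieAlgebra.of K i

/-- The automorphic action of a permutation `π ∈ S_n` on `L_n`, permuting the generators. -/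
def permMap (π : Equiv.Perm (Fin n)) : L K n →ₗ⁅K⁆ L K n :=
  FreeLieAlgebra.lift K (fun i => FreeLieAlgebra.of K (π i))

/-- The ideal `L_n'' + γ^{c+1}(L_n)` (note `γ^{k+1}(L_n) = lowerCentralSeries K L_n L_n k`). -/
abbrev nilIdeal : LieIdeal K (L K n) :=
  derivedSeries K (L K n) 2 ⊔ lowerCentralSeries K (L K n) (L K n) c

/-- The free metabelian nilpotent of class `c` Lie algebra `L_{n,c} = L_n/(L_n'' + γ^{c+1}(L_n))`. -/
abbrev Q := L K n ⧸ (nilIdeal K n c)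

/-- The canonical projection `L_n → L_{n,c}`. -/
def Qmk : L K n → Q K n c := LieSubmodule.Quotient.mk

/-- The images `x_1, …, x_n` of the generators in `L_{n,c}`. -/
def Qx (i : Fin n) : Q K n c := Qmk K n c (X K n i)

/-- An element of `L_{n,c}` is symmetric if it is fixed by the induced action of every `π ∈ S_n`.
(The defining ideal is invariant under the `S_n`-action, so the action descends.) -/
def QIsSymm (p : Q K n c) : Prop :=
  ∀ π : Equiv.Perm (Fin n), ∀ a : L K n, Qmk K n c a = p → Qmk K n c (permMap K n π a) = p

/-- The (right) adjoint operator `ad u : v ↦ [v, u]` on `L_{n,c}`. -/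
def adr (u : Q K n c) : Module.End K (Q K n c) := -(LieAlgebra.ad K (Q K n c) u)

/-- The truncated exponential `ε_u = ∑_{k=0}^{c-1} (1/k!) (ad u)^k` on `L_{n,c}`. -/
def eps (u : Q K n c) : Module.End K (Q K n c) :=
  ∑ k ∈ Finset.range c, ((Nat.factorial k : K))⁻¹ • (adr K n c u) ^ k

theorem FreeLieAlgebra.lieSpan_range_of_eq_top (R X : Type*) [CommRing R] :
    LieSubalgebra.lieSpan R _ (Set.range (FreeLieAlgebra.of R : X → FreeLieAlgebra R X)) = ⊤ := by
  set S := LieSubalgebra.lieSpan R _ (Set.range (FreeLieAlgebra.of R : X → FreeLieAlgebra R X))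
  let g : FreeLieAlgebra R X →ₗ⁅R⁆ S :=
    FreeLieAlgebra.lift R fun x => ⟨_, LieSubalgebra.subset_lieSpan ⟨x, rfl⟩⟩
  have hg : S.incl.comp g = LieHom.id := FreeLieAlgebra.hom_ext fun x => by simp [g]
  refine eq_top_iff.2 fun a _ => ?_
  exact (congrArg (· a) hg : (g a : FreeLieAlgebra R X) = a) ▸ (g a).2

lemma LieAlgebra.lie_mem_derivedSeries_one {R L : Type*} [CommRing R] [LieRing L] [LieAlgebra R L]
    (x y : L) : ⁅x, y⁆ ∈ derivedSeries R L 1 := by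
  rw [derivedSeries_def, derivedSeriesOfIdeal_succ, derivedSeriesOfIdeal_zero]
  exact LieSubmodule.lie_mem_lie (LieSubmodule.mem_top x) (LieSubmodule.mem_top y)

namespace LieIdeal

variable {R L L' : Type*} [CommRing R] [LieRing L] [LieAlgebra R L] [LieRing L'] [LieAlgebra R L']

def mkQ (I : LieIdeal R L) : L →ₗ⁅R⁆ L ⧸ I :=
  { (LieSubmodule.Quotient.mk' I : L →ₗ[R] L ⧸ I) with map_lie' := rfl }

def liftQ (I : LieIdeal R L) (f : L →ₗ⁅R⁆ L') (h : I ≤ f.ker) : L ⧸ I →ₗ⁅R⁆ L' :=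
  { I.toSubmodule.liftQ f.toLinearMap fun _ hx => LieHom.mem_ker.1 (h hx) with
    map_lie' := by rintro ⟨x⟩ ⟨y⟩; exact f.map_lie x y }

@[simp] lemma mkQ_apply (I : LieIdeal R L) (x : L) : I.mkQ x = LieSubmodule.Quotient.mk x := rfl

end LieIdeal

/-- `(v, A)` with `⁅(v, A), (w, B)⁆ = (0, v ∧ w)`, `(v ∧ w) i j = v i * w j - w i * v j`. Under
`x_i ↦ (e_i, 0)` it receives `L_{n,c}` for `c ≥ 2`; the first component records the linear part
and the second the commutators `[x_i, x_j]`. -/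
def TwoStep (R ι : Type*) : Type _ := (ι → R) × (ι → ι → R)

namespace TwoStep

variable {R ι : Type*}

@[ext]
lemma ext {x y : TwoStep R ι} (h₁ : x.1 = y.1) (h₂ : x.2 = y.2) : x = y := Prod.ext h₁ h₂

variable [CommRing R]

instance : AddCommGroup (TwoStep R ι) := inferInstanceAs (AddCommGroup ((ι → R) × (ι → ι → R)))

instance : Module R (TwoStep R ι) := inferInstanceAs (Module R ((ι → R) × (ι → ι → R)))

@[simp] lemma zero_fst : (0 : TwoStep R ι).1 = 0 := rfl
@[simp] lemma zero_snd : (0 : TwoStep R ι).2 = 0 := rfl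
@[simp] lemma add_fst (x y : TwoStep R ι) : (x + y).1 = x.1 + y.1 := rfl
@[simp] lemma add_snd (x y : TwoStep R ι) : (x + y).2 = x.2 + y.2 := rfl
@[simp] lemma sub_fst (x y : TwoStep R ι) : (x - y).1 = x.1 - y.1 := rfl
@[simp] lemma sub_snd (x y : TwoStep R ι) : (x - y).2 = x.2 - y.2 := rfl
@[simp] lemma smul_fst (t : R) (x : TwoStep R ι) : (t • x).1 = t • x.1 := rfl
@[simp] lemma smul_snd (t : R) (x : TwoStep R ι) : (t • x).2 = t • x.2 := rfl

@[simp] lemma fst_sum {κ : Type*} (s : Finset κ) (f : κ → TwoStep R ι) :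
    (∑ k ∈ s, f k).1 = ∑ k ∈ s, (f k).1 :=
  Prod.fst_sum

@[simp] lemma snd_sum {κ : Type*} (s : Finset κ) (f : κ → TwoStep R ι) :
    (∑ k ∈ s, f k).2 = ∑ k ∈ s, (f k).2 :=
  Prod.snd_sum

instance : Bracket (TwoStep R ι) (TwoStep R ι) where
  bracket x y := (0, fun i j => x.1 i * y.1 j - y.1 i * x.1 j)

@[simp] lemma lie_fst (x y : TwoStep R ι) : ⁅x, y⁆.1 = 0 := rfl
@[simp] lemma lie_snd (x y : TwoStep R ι) (i j : ι) :
    ⁅x, y⁆.2 i j = x.1 i * y.1 j - y.1 i * x.1 j := rfl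

instance : LieRing (TwoStep R ι) where
  add_lie x y z := by
    ext i j
    · simp only [lie_fst, add_fst, Pi.add_apply, Pi.zero_apply, add_zero]
    · simp only [lie_snd, add_fst, add_snd, Pi.add_apply]; ring
  lie_add x y z := by
    ext i j
    · simp only [lie_fst, add_fst, Pi.add_apply, Pi.zero_apply, add_zero]
    · simp only [lie_snd, add_fst, add_snd, Pi.add_apply]; ring
  lie_self x := by ext i j <;> simp
  leibniz_lie x y z := by ext i j <;> simp

instance : LieAlgebra R (TwoStep R ι) where
  lie_smul t x y := by
    ext i j
    · simp only [lie_fst, smul_fst, Pi.smul_apply, Pi.zero_apply, smul_eq_mul, mul_zero]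
    · simp only [lie_snd, smul_fst, smul_snd, Pi.smul_apply, smul_eq_mul]; ring

lemma lie_lie_eq_zero_left (x y z : TwoStep R ι) : ⁅⁅x, y⁆, z⁆ = 0 := by ext i j <;> simp

lemma lie_lie_eq_zero_right (x y z : TwoStep R ι) : ⁅x, ⁅y, z⁆⁆ = 0 := by ext i j <;> simp

lemma lowerCentralSeries_two_eq_bot :
    lowerCentralSeries R (TwoStep R ι) (TwoStep R ι) 2 = ⊥ := by
  rw [eq_bot_iff, ← ideal_oper_maxTrivSubmodule_eq_bot R (TwoStep R ι) (TwoStep R ι) ⊤,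
    lowerCentralSeries_succ]
  refine LieSubmodule.mono_lie_right ⊤ ?_
  rw [lowerCentralSeries_succ, lowerCentralSeries_zero, LieSubmodule.lie_le_iff]
  exact fun x _ y _ => (mem_maxTrivSubmodule _ _ _ _).2 fun z => lie_lie_eq_zero_right z x y

lemma derivedSeries_two_eq_bot : derivedSeries R (TwoStep R ι) 2 = ⊥ :=
  eq_bot_iff.2 <| (derivedSeries_le_lowerCentralSeries R (TwoStep R ι) 2).trans
    lowerCentralSeries_two_eq_bot.le

def permute (σ : ι ≃ ι) : TwoStep R ι →ₗ⁅R⁆ TwoStep R ι where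
  toFun x := (x.1 ∘ σ.symm, fun i j => x.2 (σ.symm i) (σ.symm j))
  map_add' _ _ := rfl
  map_smul' _ _ := rfl
  map_lie' := rfl

@[simp] lemma permute_apply_fst (σ : ι ≃ ι) (x : TwoStep R ι) :
    (permute σ x).1 = x.1 ∘ σ.symm := rfl

@[simp] lemma permute_apply_snd (σ : ι ≃ ι) (x : TwoStep R ι) (i j : ι) :
    (permute σ x).2 i j = x.2 (σ.symm i) (σ.symm j) := rfl

variable [DecidableEq ι]

def of (i : ι) : TwoStep R ι := (Pi.single i 1, 0)

@[simp] lemma of_fst (i : ι) : (of i : TwoStep R ι).1 = Pi.single i 1 := rfl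
@[simp] lemma of_snd (i : ι) : (of i : TwoStep R ι).2 = 0 := rfl

lemma permute_of (σ : ι ≃ ι) (i : ι) : permute σ (of i) = (of (σ i) : TwoStep R ι) := by
  ext j <;> simp [Pi.single_apply, Equiv.symm_apply_eq]

variable [Fintype ι]

@[simp] lemma sum_of_fst : (∑ i, of i : TwoStep R ι).1 = 1 := by
  ext j; simp [Pi.single_apply]

@[simp] lemma sum_of_snd : (∑ i, of i : TwoStep R ι).2 = 0 := by
  simp

lemma fst_eq_of_permute_swap_eq [NoZeroDivisors R] [CharZero R] {y : TwoStep R ι} {a b : ι}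
    (h : permute (Equiv.swap a b) (∑ i, of i + ⁅(∑ i, of i : TwoStep R ι), y⁆)
      = ∑ i, of i + ⁅(∑ i, of i : TwoStep R ι), y⁆) :
    y.1 a = y.1 b := by
  have hab := congrFun (congrFun (congrArg Prod.snd h) a) b
  simp only [permute_apply_snd, add_snd, sum_of_snd, lie_snd, sum_of_fst, Equiv.symm_swap,
    Equiv.swap_apply_left, Equiv.swap_apply_right, Pi.one_apply, one_mul, mul_one,
    zero_add] at hab
  exact sub_eq_zero.1 (self_eq_neg.1 (hab.trans (neg_sub _ _).symm))

end TwoStep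

namespace FreeLieAlgebra

variable {R ι : Type*} [CommRing R] [DecidableEq ι]

def toTwoStep : FreeLieAlgebra R ι →ₗ⁅R⁆ TwoStep R ι := lift R TwoStep.of

@[simp] lemma toTwoStep_of (i : ι) : toTwoStep (of R i) = TwoStep.of i := lift_of_apply _ _

lemma sub_sum_smul_of_mem_derivedSeries [Fintype ι] (a : FreeLieAlgebra R ι) :
    a - ∑ i, (toTwoStep a).1 i • of R i ∈ derivedSeries R (FreeLieAlgebra R ι) 1 := by
  have ha : a ∈ LieSubalgebra.lieSpan R _ (Set.range (of R)) :=
    lieSpan_range_of_eq_top R ι ▸ LieSubalgebra.mem_top a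
  induction ha using LieSubalgebra.lieSpan_induction with
  | mem x hx => obtain ⟨i, rfl⟩ := hx; simp [TwoStep.of, Pi.single_apply]
  | zero => simp
  | add x y _ _ hx hy =>
    convert add_mem hx hy using 1
    simp only [map_add, TwoStep.add_fst, Pi.add_apply, add_smul, Finset.sum_add_distrib]
    abel
  | smul t x _ hx =>
    convert SMulMemClass.smul_mem t hx using 1
    simp [smul_sub, Finset.smul_sum, smul_smul]
  | lie x y _ _ _ _ => simpa using LieAlgebra.lie_mem_derivedSeries_one x y

lemma derivedSeries_two_le_ker_toTwoStep :
    derivedSeries R (FreeLieAlgebra R ι) 2 ≤ (toTwoStep : _ →ₗ⁅R⁆ TwoStep R ι).ker :=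
  LieIdeal.map_le_iff_le_comap.1 <|
    (LieIdeal.derivedSeries_map_le 2).trans TwoStep.derivedSeries_two_eq_bot.le

lemma lowerCentralSeries_le_ker_toTwoStep {c : ℕ} (hc : 2 ≤ c) :
    lowerCentralSeries R (FreeLieAlgebra R ι) (FreeLieAlgebra R ι) c
      ≤ (toTwoStep : _ →ₗ⁅R⁆ TwoStep R ι).ker :=
  LieIdeal.map_le_iff_le_comap.1 <| (LieIdeal.map_lowerCentralSeries_le c).trans <|
    (antitone_lowerCentralSeries R _ _ hc).trans TwoStep.lowerCentralSeries_two_eq_bot.le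

end FreeLieAlgebra

section

open FreeLieAlgebra

variable {K : Type*} [Field K] {n c : ℕ}

lemma X_eq_of (i : Fin n) : X K n i = FreeLieAlgebra.of K i := rfl

lemma toTwoStep_permMap (π : Equiv.Perm (Fin n)) (a : L K n) :
    toTwoStep (permMap K n π a) = TwoStep.permute π (toTwoStep a) := by
  have : toTwoStep.comp (permMap K n π) = (TwoStep.permute π).comp toTwoStep :=
    hom_ext fun i => by simp [permMap, TwoStep.permute_of]
  exact LieHom.congr_fun this a

lemma permMap_mem_nilIdeal (π : Equiv.Perm (Fin n)) {a : L K n} (ha : a ∈ nilIdeal K n c) :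
    permMap K n π a ∈ nilIdeal K n c := by
  obtain ⟨y, hy, z, hz, rfl⟩ := LieSubmodule.mem_sup _ _ _ |>.1 ha
  rw [map_add]
  exact add_mem (LieSubmodule.mem_sup_left (LieIdeal.derivedSeries_map_le 2 (LieIdeal.mem_map hy)))
    (LieSubmodule.mem_sup_right (LieIdeal.map_lowerCentralSeries_le c (LieIdeal.mem_map hz)))

lemma QIsSymm_Qmk_of_permMap_eq {a : L K n} (ha : ∀ π, permMap K n π a = a) :
    QIsSymm K n c (Qmk K n c a) := by
  intro π b hb
  have hba : b - a ∈ nilIdeal K n c := (Submodule.Quotient.eq _).1 hb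
  rw [← ha π]
  exact (Submodule.Quotient.eq _).2 (by rw [← map_sub]; exact permMap_mem_nilIdeal π hba)

lemma QIsSymm_sum_Qx : QIsSymm K n c (∑ i, Qx K n c i) := by
  have : Qmk K n c (∑ i, X K n i) = ∑ i, Qx K n c i := map_sum (LieIdeal.mkQ _) _ _
  rw [← this]
  refine QIsSymm_Qmk_of_permMap_eq fun π => ?_
  simp only [map_sum, permMap, X_eq_of, lift_of_apply]
  exact Equiv.sum_comp π _

def QtoTwoStep (hc : 2 ≤ c) : Q K n c →ₗ⁅K⁆ TwoStep K (Fin n) :=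
  (nilIdeal K n c).liftQ toTwoStep
    (sup_le derivedSeries_two_le_ker_toTwoStep (lowerCentralSeries_le_ker_toTwoStep hc))

@[simp] lemma QtoTwoStep_Qmk (hc : 2 ≤ c) (a : L K n) :
    QtoTwoStep hc (Qmk K n c a) = toTwoStep a := rfl

@[simp] lemma QtoTwoStep_Qx (hc : 2 ≤ c) (i : Fin n) :
    QtoTwoStep hc (Qx K n c i) = TwoStep.of i := lift_of_apply _ _

lemma permute_QtoTwoStep_of_QIsSymm (hc : 2 ≤ c) {p : Q K n c} (hp : QIsSymm K n c p)
    (π : Equiv.Perm (Fin n)) : TwoStep.permute π (QtoTwoStep hc p) = QtoTwoStep hc p := by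
  obtain ⟨a, rfl⟩ : ∃ a, Qmk K n c a = p := Submodule.Quotient.mk_surjective _ p
  calc TwoStep.permute π (QtoTwoStep hc (Qmk K n c a))
      = QtoTwoStep hc (Qmk K n c (permMap K n π a)) := (toTwoStep_permMap π a).symm
    _ = QtoTwoStep hc (Qmk K n c a) := by rw [hp π a rfl]

lemma adr_apply (u v : Q K n c) : adr K n c u v = ⁅v, u⁆ := by
  rw [adr, LinearMap.neg_apply, LieAlgebra.ad_apply, lie_skew]

lemma QtoTwoStep_eps (hc : 2 ≤ c) (u v : Q K n c) :
    QtoTwoStep hc (eps K n c u v) = QtoTwoStep hc v + ⁅QtoTwoStep hc v, QtoTwoStep hc u⁆ := by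
  have hvanish (k : ℕ) : QtoTwoStep hc ((adr K n c u ^ (k + 2)) v) = 0 := by
    rw [pow_succ', pow_succ', Module.End.mul_apply, Module.End.mul_apply, adr_apply, adr_apply,
      LieHom.map_lie, LieHom.map_lie, TwoStep.lie_lie_eq_zero_left]
  obtain ⟨m, rfl⟩ := Nat.exists_eq_add_of_le' hc
  rw [eps, LinearMap.sum_apply, map_sum, Finset.sum_range_succ', Finset.sum_range_succ']
  simp only [LinearMap.smul_apply, map_smul, hvanish, smul_zero, Finset.sum_const_zero, zero_add,
    pow_one, pow_zero, Module.End.one_apply, Nat.factorial_zero, Nat.factorial_one, Nat.cast_one,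
    inv_one, one_smul, adr_apply, LieHom.map_lie]
  exact add_comm _ _

lemma sub_sum_smul_Qx_mem_derivedSeries (hc : 2 ≤ c) (p : Q K n c) :
    p - ∑ i, (QtoTwoStep hc p).1 i • Qx K n c i ∈ derivedSeries K (Q K n c) 1 := by
  obtain ⟨a, rfl⟩ : ∃ a, Qmk K n c a = p := Submodule.Quotient.mk_surjective _ p
  rw [QtoTwoStep_Qmk]
  convert LieIdeal.derivedSeries_map_le 1
    (LieIdeal.mem_map (f := (nilIdeal K n c).mkQ) (sub_sum_smul_of_mem_derivedSeries a)) using 1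
  simp [map_sub, map_sum, map_smul, Qx, Qmk, X_eq_of]

end

theorem eps_preserves_symm_imp_linear_part_general {K : Type*} [Field K] [CharZero K] {n c : ℕ}
    (hc : 2 ≤ c) (u : Q K n c)
    (h : ∀ v : Q K n c, QIsSymm K n c v → QIsSymm K n c (eps K n c u v)) :
    ∃ α : K, u - α • (∑ i : Fin n, Qx K n c i) ∈ derivedSeries K (Q K n c) 1 := by
  set s := ∑ i, Qx K n c i
  have hs : QtoTwoStep hc s = ∑ i, TwoStep.of i := by simp [s]
  have hconst (a b : Fin n) : (QtoTwoStep hc u).1 a = (QtoTwoStep hc u).1 b := by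
    refine TwoStep.fst_eq_of_permute_swap_eq ?_
    rw [← hs, ← QtoTwoStep_eps]
    exact permute_QtoTwoStep_of_QIsSymm hc (h s QIsSymm_sum_Qx) _
  obtain ⟨α, hα⟩ : ∃ α, ∀ i, (QtoTwoStep hc u).1 i = α := by
    rcases isEmpty_or_nonempty (Fin n) with _ | ⟨⟨i₀⟩⟩
    · exact ⟨0, isEmptyElim⟩
    · exact ⟨_, fun i => hconst i i₀⟩
  refine ⟨α, ?_⟩
  simpa [hα, ← Finset.smul_sum] using sub_sum_smul_Qx_mem_derivedSeries hc u

/-- If `u ∈ L_{n,c}` is such that the inner automorphism `ε_u` maps every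
symmetric element of `L_{n,c}` to a symmetric element, then the linear part of `u` is a scalar
multiple of `x_1 + ⋯ + x_n`: there is `α ∈ K` with `u − α(x_1 + ⋯ + x_n)` in the commutator
ideal `L_{n,c}' = [L_{n,c}, L_{n,c}]`. -/
theorem eps_preserves_symm_imp_linear_part {K : Type*} [Field K] [CharZero K] {n c : ℕ}
    (hn : 2 ≤ n) (hc : 2 ≤ c) (u : Q K n c)
    (h : ∀ v : Q K n c, QIsSymm K n c v → QIsSymm K n c (eps K n c u v)) :
    ∃ α : K, u - α • (∑ i : Fin n, Qx K n c i) ∈ derivedSeries K (Q K n c) 1 :=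
  eps_preserves_symm_imp_linear_part_general hc u h
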